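/- Let f have coordinate-wise Lipschitz gradient with constant L_i along e_i and let y ∈ [l,u]. If 0 < ν ≤ 2|∇_i f(y)|/L_i, then for every α with 0 < α ≤ ν such that y + α·sign(∇_i f(y)) e_i ∈ [l,u] and every γ > 0, f(y + α·sign(∇_i f(y)) e_i) > f(y) − γα². (Hence no sufficient decrease is possible along the ascent direction sign(∇_i f(y)) e_i with stepsizes at most ν.) -/

import Mathlib

/-- The box `[l, u]` in `ℝⁿ`. -/
def Box {n : ℕ} (l u : EuclideanSpace ℝ (Fin n)) : Set (EuclideanSpace ℝ (Fin n)) :=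
  {y | ∀ j, l j ≤ y j ∧ y j ≤ u j}

/-!
Along the ray `t ↦ y + t s eᵢ` with `s = sign ∇ᵢf(y)`, the slope of `f` starts at `|∇ᵢf(y)|`
and, by the coordinatewise Lipschitz bound, drops by at most `Lᵢ t`. Integrating gives
`f(y + α s eᵢ) ≥ f(y) + α |∇ᵢf(y)| - Lᵢ α² / 2`, which is `≥ f(y)` as soon as
`α ≤ 2 |∇ᵢf(y)| / Lᵢ`.
-/

open Set

lemma add_mul_sub_half_mul_sq_le_of_le_deriv {φ φ' : ℝ → ℝ} {t c L : ℝ} (ht : 0 ≤ t)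
    (hφ : ∀ τ ∈ Icc 0 t, HasDerivAt φ (φ' τ) τ) (hφ' : ∀ τ ∈ Icc 0 t, c - L * τ ≤ φ' τ) :
    φ 0 + c * t - L / 2 * t ^ 2 ≤ φ t := by
  set χ : ℝ → ℝ := fun τ => φ τ - c * τ + L / 2 * τ ^ 2
  have hχ : ∀ τ ∈ Icc 0 t, HasDerivAt χ (φ' τ - c + L * τ) τ := fun τ hτ =>
    (((hφ τ hτ).sub ((hasDerivAt_id τ).const_mul c)).add
      ((hasDerivAt_pow 2 τ).const_mul (L / 2))).congr_deriv (by simp; ring)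
  have hmono : MonotoneOn χ (Icc 0 t) := by
    refine monotoneOn_of_hasDerivWithinAt_nonneg (convex_Icc 0 t)
      (fun τ hτ => (hχ τ hτ).continuousAt.continuousWithinAt)
      (fun τ hτ => (hχ τ (interior_subset hτ)).hasDerivWithinAt) fun τ hτ => ?_
    linarith [hφ' τ (interior_subset hτ)]
  have := hmono (left_mem_Icc.mpr ht) (right_mem_Icc.mpr ht) ht
  simp only [χ] at this
  linarith

lemma Convex.add_smul_mem_of_mem_Icc {E : Type*} [AddCommGroup E] [Module ℝ E] {s : Set E}
    (hs : Convex ℝ s) {x v : E} {α τ : ℝ} (hx : x ∈ s) (hxv : x + α • v ∈ s)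
    (hτ : τ ∈ Icc 0 α) : x + τ • v ∈ s := by
  obtain rfl | hτ₀ := hτ.1.eq_or_lt
  · simpa using hx
  have hα := hτ₀.trans_le hτ.2
  have := hs.add_smul_mem hx hxv (t := τ / α) ⟨div_nonneg hτ.1 hα.le, (div_le_one hα).mpr hτ.2⟩
  rwa [smul_smul, div_mul_cancel₀ _ hα.ne'] at this

section InnerProductSpace

variable {E : Type*} [NormedAddCommGroup E] [InnerProductSpace ℝ E] [CompleteSpace E]

lemma HasGradientAt.hasDerivAt_comp_add_smul {f : E → ℝ} {f' x v : E} {τ : ℝ}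
    (hf : HasGradientAt f f' (x + τ • v)) :
    HasDerivAt (fun σ : ℝ => f (x + σ • v)) (inner ℝ f' v) τ := by
  have hline : HasDerivAt (fun σ : ℝ => x + σ • v) v τ := by
    simpa using ((hasDerivAt_id τ).smul_const v).const_add x
  have := hf.hasFDerivAt.comp_hasDerivAt τ hline
  simp only [InnerProductSpace.toDual_apply_apply] at this
  exact this

lemma add_mul_sub_half_mul_sq_le_of_inner_gradient_ge {f : E → ℝ} {g : E → E} {x v : E}
    {α c L : ℝ} (hα : 0 ≤ α)
    (hg : ∀ τ ∈ Icc 0 α, HasGradientAt f (g (x + τ • v)) (x + τ • v))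
    (hslope : ∀ τ ∈ Icc 0 α, c - L * τ ≤ inner ℝ (g (x + τ • v)) v) :
    f x + c * α - L / 2 * α ^ 2 ≤ f (x + α • v) := by
  simpa using add_mul_sub_half_mul_sq_le_of_le_deriv (φ := fun σ => f (x + σ • v)) hα
    (fun τ hτ => (hg τ hτ).hasDerivAt_comp_add_smul) hslope

end InnerProductSpace

lemma Real.sign_mul_self (r : ℝ) : Real.sign r * r = |r| := by
  rcases lt_trichotomy r 0 with hr | rfl | hr
  · rw [Real.sign_of_neg hr, abs_of_neg hr]; ring
  · simp
  · rw [Real.sign_of_pos hr, abs_of_pos hr]; ring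

lemma Real.abs_sign_le_one (r : ℝ) : |Real.sign r| ≤ 1 := by
  rcases Real.sign_apply_eq r with h | h | h <;> simp [h]

lemma abs_sub_mul_le_sign_mul_of_abs_sub_le {a b L τ : ℝ} (hτ : 0 ≤ τ) (hL : 0 ≤ L)
    (h : |a - b| ≤ L * |τ * Real.sign b|) : |b| - L * τ ≤ Real.sign b * a := by
  have hs := Real.abs_sign_le_one b
  have hab : |a - b| ≤ L * τ := h.trans <| mul_le_mul_of_nonneg_left
    (by rw [abs_mul, abs_of_nonneg hτ]; exact mul_le_of_le_one_right hτ hs) hL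
  have hsab : |Real.sign b * (a - b)| ≤ |a - b| := by
    rw [abs_mul]; exact mul_le_of_le_one_left (abs_nonneg _) hs
  have hsplit : Real.sign b * a = |b| + Real.sign b * (a - b) := by
    rw [← Real.sign_mul_self]; ring
  linarith [neg_abs_le (Real.sign b * (a - b))]

lemma convex_box {n : ℕ} (l u : EuclideanSpace ℝ (Fin n)) : Convex ℝ (Box l u) := by
  intro x hx y hy a b ha hb hab j
  obtain ⟨hlx, hxu⟩ := hx j
  obtain ⟨hly, hyu⟩ := hy j
  simp only [PiLp.add_apply, PiLp.smul_apply, smul_eq_mul]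
  constructor
  · calc l j = a * l j + b * l j := by rw [← add_mul, hab, one_mul]
      _ ≤ a * x j + b * y j := by gcongr
  · calc a * x j + b * y j ≤ a * u j + b * u j := by gcongr
      _ = u j := by rw [← add_mul, hab, one_mul]

theorem stmt19_general {n : ℕ} (f : EuclideanSpace ℝ (Fin n) → ℝ)
    (g : EuclideanSpace ℝ (Fin n) → EuclideanSpace ℝ (Fin n))
    (l u y : EuclideanSpace ℝ (Fin n)) (i : Fin n) (Li ν : ℝ)
    (hgrad : ∀ w ∈ Box l u, HasGradientAt f (g w) w)
    (hlip : ∀ w : EuclideanSpace ℝ (Fin n), ∀ t : ℝ, w ∈ Box l u →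
      w + t • EuclideanSpace.single i (1:ℝ) ∈ Box l u →
      |g (w + t • EuclideanSpace.single i (1:ℝ)) i - g w i| ≤ Li * |t|)
    (hy : y ∈ Box l u) (hν : ν ≤ 2 * |g y i| / Li) :
    ∀ α γ : ℝ, 0 < α → α ≤ ν → 0 < γ →
      y + (α * Real.sign (g y i)) • EuclideanSpace.single i (1:ℝ) ∈ Box l u →
      f (y + (α * Real.sign (g y i)) • EuclideanSpace.single i (1:ℝ)) > f y - γ * α ^ 2 := by
  intro α γ hα hαν hγ hmem
  set s := Real.sign (g y i)
  set e : EuclideanSpace ℝ (Fin n) := EuclideanSpace.single i 1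
  have hLi : 0 < Li := by
    obtain ⟨-, h⟩ | ⟨h, -⟩ := div_pos_iff.mp (hα.trans_le (hαν.trans hν))
    · exact h
    · linarith [abs_nonneg (g y i)]
  rw [mul_smul] at hmem ⊢
  have hseg : ∀ τ ∈ Icc 0 α, y + τ • s • e ∈ Box l u := fun τ hτ =>
    (convex_box l u).add_smul_mem_of_mem_Icc hy hmem hτ
  have hdesc := add_mul_sub_half_mul_sq_le_of_inner_gradient_ge (c := |g y i|) (L := Li) hα.le
    (fun τ hτ => hgrad _ (hseg τ hτ)) fun τ hτ => by
      have hlipτ := hlip y (τ * s) hy (by rw [mul_smul]; exact hseg τ hτ)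
      rw [← mul_smul, inner_smul_right, EuclideanSpace.inner_single_right, conj_trivial, one_mul]
      exact abs_sub_mul_le_sign_mul_of_abs_sub_le hτ.1 hLi.le hlipτ
  have hstep : Li * α ≤ 2 * |g y i| := by rw [le_div_iff₀ hLi] at hν; nlinarith
  nlinarith [mul_le_mul_of_nonneg_right hstep hα.le, mul_pos hγ (pow_pos hα 2)]

theorem stmt19 {n : ℕ} (f : EuclideanSpace ℝ (Fin n) → ℝ)
    (g : EuclideanSpace ℝ (Fin n) → EuclideanSpace ℝ (Fin n))
    (l u y : EuclideanSpace ℝ (Fin n)) (i : Fin n) (Li ν : ℝ)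
    (hLi : 0 < Li)
    (hgrad : ∀ w ∈ Box l u, HasGradientAt f (g w) w)
    (hlip : ∀ w : EuclideanSpace ℝ (Fin n), ∀ t : ℝ, w ∈ Box l u →
      w + t • EuclideanSpace.single i (1:ℝ) ∈ Box l u →
      |g (w + t • EuclideanSpace.single i (1:ℝ)) i - g w i| ≤ Li * |t|)
    (hy : y ∈ Box l u) (hν0 : 0 < ν) (hν : ν ≤ 2 * |g y i| / Li) :
    ∀ α γ : ℝ, 0 < α → α ≤ ν → 0 < γ →
      y + (α * Real.sign (g y i)) • EuclideanSpace.single i (1:ℝ) ∈ Box l u →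
      f (y + (α * Real.sign (g y i)) • EuclideanSpace.single i (1:ℝ)) > f y - γ * α ^ 2 :=
  stmt19_general f g l u y i Li ν hgrad hlip hy hν
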